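/- For every integer m and real numbers p, ρ, the limit as l → ∞ of (1/(2π)) ∫_0^{2π} e^{i m ψ} (1 + (i p ρ/(2l)) e^{-iψ})^{l} (1 + (i p ρ/(2l)) e^{iψ})^{l} dψ equals (1/(2π)) ∫_0^{2π} e^{i p ρ cos ψ} e^{i m ψ} dψ. -/

import Mathlib

/-!
Write `z = i p ρ / 2`. The integrand is `e^{imψ} (1 + z e^{-iψ}/l)^l (1 + z e^{iψ}/l)^l`, which
converges pointwise to `e^{imψ} e^{z e^{-iψ}} e^{z e^{iψ}} = e^{imψ} e^{ipρ cos ψ}`. Since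
`‖(1 + w/l)^l‖ ≤ e^{‖w‖}` uniformly in `l`, dominated convergence lets the limit pass under the
integral.
-/

open Filter Complex Real intervalIntegral Topology

lemma Complex.norm_one_add_div_pow_le_exp_norm (z : ℂ) (n : ℕ) :
    ‖(1 + z / n) ^ n‖ ≤ Real.exp ‖z‖ :=
  calc ‖(1 + z / n) ^ n‖ = ‖1 + z / n‖ ^ n := norm_pow _ _
    _ ≤ (1 - (-‖z‖) / n) ^ n := by
      gcongr
      calc ‖1 + z / n‖ ≤ ‖(1 : ℂ)‖ + ‖z / n‖ := norm_add_le _ _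
        _ = 1 - (-‖z‖) / n := by simp [neg_div]
    _ ≤ Real.exp (-(-‖z‖)) :=
      one_sub_div_pow_le_exp_neg (by linarith [norm_nonneg z, n.cast_nonneg (α := ℝ)])
    _ = Real.exp ‖z‖ := by rw [neg_neg]

lemma tendsto_intervalIntegral_mul_one_add_div_pow_mul_one_add_div_pow {g u v : ℝ → ℂ}
    (hg : Continuous g) (hu : Continuous u) (hv : Continuous v) (a b : ℝ) :
    Tendsto (fun n : ℕ => ∫ x in a..b, g x * (1 + u x / n) ^ n * (1 + v x / n) ^ n) atTop
      (𝓝 (∫ x in a..b, g x * exp (u x) * exp (v x))) := by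
  refine tendsto_integral_filter_of_dominated_convergence
    (fun x => ‖g x‖ * Real.exp ‖u x‖ * Real.exp ‖v x‖) ?_ ?_ ?_ ?_
  · exact Eventually.of_forall fun n => (by fun_prop : Continuous _).aestronglyMeasurable
  · refine Eventually.of_forall fun n => Eventually.of_forall fun x _ => ?_
    rw [norm_mul, norm_mul]
    gcongr <;> exact norm_one_add_div_pow_le_exp_norm _ _
  · exact (by fun_prop : Continuous _).intervalIntegrable _ _
  · exact Eventually.of_forall fun x _ =>
      (tendsto_const_nhds.mul (tendsto_one_add_div_pow_exp (u x))).mul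
        (tendsto_one_add_div_pow_exp (v x))

/-- Contraction of the integral representation of Jacobi polynomials to the
Bessel-type integral of `E(2)` matrix elements. -/
theorem jacobi_to_bessel_contraction (m : ℤ) (p ρ : ℝ) :
    Tendsto
      (fun l : ℕ =>
        (1 / (2 * (Real.pi : ℂ))) *
          ∫ ψ in (0:ℝ)..(2 * Real.pi),
            Complex.exp (Complex.I * (m : ℂ) * (ψ : ℂ)) *
              (1 + (Complex.I * (p : ℂ) * (ρ : ℂ) / (2 * (l : ℂ))) *
                Complex.exp (-(Complex.I) * (ψ : ℂ))) ^ l *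
              (1 + (Complex.I * (p : ℂ) * (ρ : ℂ) / (2 * (l : ℂ))) *
                Complex.exp (Complex.I * (ψ : ℂ))) ^ l)
      atTop
      (nhds ((1 / (2 * (Real.pi : ℂ))) *
        ∫ ψ in (0:ℝ)..(2 * Real.pi),
          Complex.exp (Complex.I * (p : ℂ) * (ρ : ℂ) * (Real.cos ψ : ℂ)) *
            Complex.exp (Complex.I * (m : ℂ) * (ψ : ℂ)))) := by
  set z : ℂ := I * p * ρ / 2
  have hfactor (l : ℕ) (w : ℂ) : 1 + I * p * ρ / (2 * l) * w = 1 + z * w / l := by ring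
  have hcos (ψ : ℝ) : exp (I * p * ρ * (Real.cos ψ : ℂ)) * exp (I * m * ψ) =
      exp (I * m * ψ) * exp (z * exp (-I * ψ)) * exp (z * exp (I * ψ)) := by
    simp only [← Complex.exp_add, ofReal_cos, Complex.cos, z]
    ring_nf
  simp_rw [hfactor, hcos]
  exact (tendsto_intervalIntegral_mul_one_add_div_pow_mul_one_add_div_pow
    (by fun_prop) (by fun_prop) (by fun_prop) _ _).const_mul _
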